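/- arXiv:2105.11003 — 5 statements merged into one kernel-verified Lean document; each statement's English description precedes it below -/
import Mathlib

section
/- Let ε, δ, μ, Λ, C₁ be positive real numbers and set C_min := max{1/Λ, C₁/(2Λ)}. Assume ε²·μ ≥ C_min·δ. Let g : [0,1] → ℝ be twice continuously differentiable with g(x) ≥ −1 and ε²·|g''(x)| ≤ C₁ for all x ∈ [0,1]. Let φ : [0,1] → ℝ be twice continuously differentiable and satisfy the coercivity hypothesis ∫₀¹ (ε²·φ'(x)² + g(x)·φ(x)²) dx ≥ Λ·∫₀¹ (ε²·φ'(x)² + φ(x)²) dx. Then δ·∫₀¹ (ε²·φ''(x)² + g(x)·φ'(x)² − ½·g''(x)·φ(x)²) dx + μ·∫₀¹ (ε²·φ'(x)² + g(x)·φ(x)²) dx ≥ Λ·(μ − C_min·δ·ε⁻²)·∫₀¹ φ(x)² dx. -/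
/-!
Pointwise, `g ≥ -1` and `ε² g'' ≤ C₁` bound the integrand of the `δ`-term below by
`-φ'² - (C₁ / 2ε²) φ²`, while the coercivity hypothesis bounds the `μ`-term below by
`Λ (ε² ∫ φ'² + ∫ φ²)`. The choice of `C_min` makes the `∫ φ'²` contributions combine to
something nonnegative and the `∫ φ²` contributions to at least `Λ (μ - C_min δ / ε²)`.
-/

open Set intervalIntegral

theorem ContDiff.continuous_deriv_deriv {f : ℝ → ℝ} (hf : ContDiff ℝ 2 f) :
    Continuous (deriv (deriv f)) :=
  (hf.deriv' (n := 1)).continuous_deriv le_rfl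

theorem second_variation_integrand_lower_bound {ε C₁ g g'' p₀ p₁ p₂ : ℝ} (hε : ε ≠ 0)
    (hg : -1 ≤ g) (hg'' : ε ^ 2 * |g''| ≤ C₁) :
    -p₁ ^ 2 - C₁ / (2 * ε ^ 2) * p₀ ^ 2 ≤ ε ^ 2 * p₂ ^ 2 + g * p₁ ^ 2 - 1 / 2 * g'' * p₀ ^ 2 := by
  have hε2 : 0 < ε ^ 2 := by positivity
  have hg''_le : g'' ≤ C₁ / ε ^ 2 := by
    rw [le_div_iff₀ hε2]
    nlinarith [le_abs_self g'']
  have hcoef : C₁ / (2 * ε ^ 2) = C₁ / ε ^ 2 / 2 := by ring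
  rw [hcoef]
  nlinarith [mul_le_mul_of_nonneg_right hg (sq_nonneg p₁),
    mul_le_mul_of_nonneg_right hg''_le (sq_nonneg p₀), sq_nonneg p₂]

theorem integral_second_variation_ge {ε C₁ a b : ℝ} (hε : ε ≠ 0) (hab : a ≤ b)
    {g φ : ℝ → ℝ} (hg : ContDiff ℝ 2 g) (hφ : ContDiff ℝ 2 φ)
    (hg_ge : ∀ x ∈ Icc a b, -1 ≤ g x)
    (hg''_le : ∀ x ∈ Icc a b, ε ^ 2 * |deriv (deriv g) x| ≤ C₁) :
    -(∫ x in a..b, deriv φ x ^ 2) - C₁ / (2 * ε ^ 2) * ∫ x in a..b, φ x ^ 2 ≤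
      ∫ x in a..b, (ε ^ 2 * deriv (deriv φ) x ^ 2 + g x * deriv φ x ^ 2
        - 1 / 2 * deriv (deriv g) x * φ x ^ 2) := by
  have hφ' := hφ.continuous_deriv (by norm_num)
  have hφ'' := hφ.continuous_deriv_deriv
  have hg'' := hg.continuous_deriv_deriv
  have hneg_dφ_sq : Continuous fun x => -deriv φ x ^ 2 := (hφ'.pow 2).neg
  have hφ_sq : Continuous fun x => C₁ / (2 * ε ^ 2) * φ x ^ 2 :=
    continuous_const.mul (hφ.continuous.pow 2)
  calc -(∫ x in a..b, deriv φ x ^ 2) - C₁ / (2 * ε ^ 2) * ∫ x in a..b, φ x ^ 2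
      = ∫ x in a..b, (-deriv φ x ^ 2 - C₁ / (2 * ε ^ 2) * φ x ^ 2) := by
        rw [integral_sub (hneg_dφ_sq.intervalIntegrable a b) (hφ_sq.intervalIntegrable a b),
          integral_neg, integral_const_mul]
    _ ≤ _ := by
      refine integral_mono_on hab ((hneg_dφ_sq.sub hφ_sq).intervalIntegrable a b) ?_
        fun x hx => second_variation_integrand_lower_bound hε (hg_ge x hx) (hg''_le x hx)
      exact (((continuous_const.mul (hφ''.pow 2)).add (hg.continuous.mul (hφ'.pow 2))).sub
        ((continuous_const.mul hg'').mul (hφ.continuous.pow 2))).intervalIntegrable a b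

theorem integral_energy_eq {ε a b : ℝ} {φ : ℝ → ℝ} (hφ : ContDiff ℝ 1 φ) :
    ∫ x in a..b, (ε ^ 2 * deriv φ x ^ 2 + φ x ^ 2) =
      ε ^ 2 * (∫ x in a..b, deriv φ x ^ 2) + ∫ x in a..b, φ x ^ 2 := by
  have hdφ_sq : Continuous fun x => ε ^ 2 * deriv φ x ^ 2 :=
    continuous_const.mul (hφ.continuous_deriv_one.pow 2)
  have hφ_sq : Continuous fun x => φ x ^ 2 := hφ.continuous.pow 2
  rw [integral_add (hdφ_sq.intervalIntegrable a b) (hφ_sq.intervalIntegrable a b),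
    integral_const_mul]

theorem combine_variation_bounds {ε δ μ Λ C₁ Cmin A B J I : ℝ} (hε : ε ≠ 0) (hδ : 0 ≤ δ)
    (hμ : 0 ≤ μ) (hΛ : 0 < Λ) (hCmin : Cmin = max (1 / Λ) (C₁ / (2 * Λ)))
    (hcond : Cmin * δ ≤ ε ^ 2 * μ) (hJ : 0 ≤ J) (hI : 0 ≤ I)
    (hA : -J - C₁ / (2 * ε ^ 2) * I ≤ A) (hB : Λ * (ε ^ 2 * J + I) ≤ B) :
    Λ * (μ - Cmin * δ / ε ^ 2) * I ≤ δ * A + μ * B := by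
  have hε2 : 0 < ε ^ 2 := by positivity
  have hΛCmin : 1 ≤ Λ * Cmin := by
    rw [← div_le_iff₀' hΛ, hCmin]; exact le_max_left _ _
  have hC₁ : C₁ ≤ 2 * Λ * Cmin := by
    rw [← div_le_iff₀' (by positivity), hCmin]; exact le_max_right _ _
  have hJcoef : δ ≤ Λ * μ * ε ^ 2 := by nlinarith
  have hIcoef : δ * (C₁ / (2 * ε ^ 2)) ≤ Λ * (Cmin * δ / ε ^ 2) := by
    rw [mul_div_assoc', mul_div_assoc', div_le_div_iff₀ (by positivity) hε2]
    nlinarith [mul_le_mul_of_nonneg_right hC₁ (mul_nonneg hδ hε2.le)]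
  nlinarith [mul_le_mul_of_nonneg_left hA hδ, mul_le_mul_of_nonneg_left hB hμ,
    mul_le_mul_of_nonneg_right hIcoef hI, mul_nonneg (sub_nonneg.mpr hJcoef) hJ]

theorem stmt_0_general (ε δ μ Λ C₁ : ℝ) (hε : 0 < ε) (hδ : 0 < δ) (hμ : 0 < μ)
    (hΛ : 0 < Λ)
    (Cmin : ℝ) (hCmin : Cmin = max (1 / Λ) (C₁ / (2 * Λ)))
    (hcond : ε ^ 2 * μ ≥ Cmin * δ)
    (g : ℝ → ℝ) (hg : ContDiff ℝ 2 g)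
    (hg1 : ∀ x ∈ Icc (0:ℝ) 1, g x ≥ -1)
    (hg2 : ∀ x ∈ Icc (0:ℝ) 1, ε ^ 2 * |deriv (deriv g) x| ≤ C₁)
    (φ : ℝ → ℝ) (hφ : ContDiff ℝ 2 φ)
    (hcoer : ∫ x in (0:ℝ)..1, (ε ^ 2 * (deriv φ x) ^ 2 + g x * (φ x) ^ 2) ≥
      Λ * ∫ x in (0:ℝ)..1, (ε ^ 2 * (deriv φ x) ^ 2 + (φ x) ^ 2)) :
    δ * (∫ x in (0:ℝ)..1,
        (ε ^ 2 * (deriv (deriv φ) x) ^ 2 + g x * (deriv φ x) ^ 2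
          - 1 / 2 * deriv (deriv g) x * (φ x) ^ 2))
      + μ * (∫ x in (0:ℝ)..1, (ε ^ 2 * (deriv φ x) ^ 2 + g x * (φ x) ^ 2))
      ≥ Λ * (μ - Cmin * δ / ε ^ 2) * ∫ x in (0:ℝ)..1, (φ x) ^ 2 := by
  have hA := integral_second_variation_ge hε.ne' zero_le_one hg hφ hg1 hg2
  rw [integral_energy_eq (hφ.of_le (by norm_num))] at hcoer
  exact combine_variation_bounds hε.ne' hδ.le hμ.le hΛ hCmin hcond
    (integral_nonneg zero_le_one fun x _ => sq_nonneg _)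
    (integral_nonneg zero_le_one fun x _ => sq_nonneg _) hA hcoer

theorem stmt_0 (ε δ μ Λ C₁ : ℝ) (hε : 0 < ε) (hδ : 0 < δ) (hμ : 0 < μ)
    (hΛ : 0 < Λ) (hC₁ : 0 < C₁)
    (Cmin : ℝ) (hCmin : Cmin = max (1 / Λ) (C₁ / (2 * Λ)))
    (hcond : ε ^ 2 * μ ≥ Cmin * δ)
    (g : ℝ → ℝ) (hg : ContDiff ℝ 2 g)
    (hg1 : ∀ x ∈ Icc (0:ℝ) 1, g x ≥ -1)
    (hg2 : ∀ x ∈ Icc (0:ℝ) 1, ε ^ 2 * |deriv (deriv g) x| ≤ C₁)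
    (φ : ℝ → ℝ) (hφ : ContDiff ℝ 2 φ)
    (hcoer : ∫ x in (0:ℝ)..1, (ε ^ 2 * (deriv φ x) ^ 2 + g x * (φ x) ^ 2) ≥
      Λ * ∫ x in (0:ℝ)..1, (ε ^ 2 * (deriv φ x) ^ 2 + (φ x) ^ 2)) :
    δ * (∫ x in (0:ℝ)..1,
        (ε ^ 2 * (deriv (deriv φ) x) ^ 2 + g x * (deriv φ x) ^ 2
          - 1 / 2 * deriv (deriv g) x * (φ x) ^ 2))
      + μ * (∫ x in (0:ℝ)..1, (ε ^ 2 * (deriv φ x) ^ 2 + g x * (φ x) ^ 2))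
      ≥ Λ * (μ - Cmin * δ / ε ^ 2) * ∫ x in (0:ℝ)..1, (φ x) ^ 2 :=
  stmt_0_general ε δ μ Λ C₁ hε hδ hμ hΛ Cmin hCmin hcond g hg hg1 hg2 φ hφ hcoer
end

section
/- Let ε ∈ (0,1], let δ, μ, Λ, c be positive reals, and let C satisfy 0 < C ≤ 1 and C < Λ, with μ·ε² ≥ ((c + C)/(Λ − C))·δ. Let g : [0,1] → ℝ be twice continuously differentiable with |g(x)| ≤ c and |g''(x)| ≤ c·ε⁻² for all x ∈ [0,1]. Let υ : [0,1] → ℝ be twice continuously differentiable and satisfy ∫₀¹ (ε²·υ'(x)² + g(x)·υ(x)²) dx ≥ Λ·∫₀¹ (ε²·υ'(x)² + υ(x)²) dx. Then ∫₀¹ [δ·(ε²·υ''(x)² + g(x)·υ'(x)² − ½·g''(x)·υ(x)²) + μ·(ε²·υ'(x)² + g(x)·υ(x)²)] dx ≥ C·∫₀¹ [δ·ε²·υ''(x)² + (δ + μ·ε²)·υ'(x)² + (δ + μ)·υ(x)²] dx. -/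
open Set MeasureTheory intervalIntegral

set_option maxHeartbeats 2000000 in
theorem stmt_2 (ε δ μ Λ c C : ℝ) (hε : 0 < ε) (hε1 : ε ≤ 1)
    (hδ : 0 < δ) (hμ : 0 < μ) (hΛ : 0 < Λ) (hc : 0 < c)
    (hC0 : 0 < C) (hC1 : C ≤ 1) (hCΛ : C < Λ)
    (hcond : μ * ε ^ 2 ≥ (c + C) / (Λ - C) * δ)
    (g : ℝ → ℝ) (hg : ContDiff ℝ 2 g)
    (hgb : ∀ x ∈ Icc (0:ℝ) 1, |g x| ≤ c)
    (hg2 : ∀ x ∈ Icc (0:ℝ) 1, |deriv (deriv g) x| ≤ c / ε ^ 2)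
    (υ : ℝ → ℝ) (hυ : ContDiff ℝ 2 υ)
    (hcoer : ∫ x in (0:ℝ)..1, (ε ^ 2 * (deriv υ x) ^ 2 + g x * (υ x) ^ 2) ≥
      Λ * ∫ x in (0:ℝ)..1, (ε ^ 2 * (deriv υ x) ^ 2 + (υ x) ^ 2)) :
    (∫ x in (0:ℝ)..1,
        (δ * (ε ^ 2 * (deriv (deriv υ) x) ^ 2 + g x * (deriv υ x) ^ 2
            - 1 / 2 * deriv (deriv g) x * (υ x) ^ 2)
          + μ * (ε ^ 2 * (deriv υ x) ^ 2 + g x * (υ x) ^ 2)))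
      ≥ C * ∫ x in (0:ℝ)..1,
          (δ * ε ^ 2 * (deriv (deriv υ) x) ^ 2
            + (δ + μ * ε ^ 2) * (deriv υ x) ^ 2
            + (δ + μ) * (υ x) ^ 2) := by
  have hε2 : (0:ℝ) < ε ^ 2 := by positivity
  -- continuity of derivatives
  have hυ1 : ContDiff ℝ 1 (deriv υ) := by
    have h := hυ
    rw [show (2 : WithTop ℕ∞) = 1 + 1 from rfl, contDiff_succ_iff_deriv] at h
    exact h.2.2
  have hg1 : ContDiff ℝ 1 (deriv g) := by
    have h := hg
    rw [show (2 : WithTop ℕ∞) = 1 + 1 from rfl, contDiff_succ_iff_deriv] at h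
    exact h.2.2
  have cu : Continuous υ := hυ.continuous
  have cu' : Continuous (deriv υ) := hυ1.continuous
  have cu'' : Continuous (deriv (deriv υ)) := hυ1.continuous_deriv le_rfl
  have cg : Continuous g := hg.continuous
  have cg'' : Continuous (deriv (deriv g)) := hg1.continuous_deriv le_rfl
  obtain ⟨I2, hI2def⟩ : ∃ r : ℝ, r = ∫ x in (0:ℝ)..1, (deriv (deriv υ) x) ^ 2 := ⟨_, rfl⟩
  obtain ⟨I1, hI1def⟩ : ∃ r : ℝ, r = ∫ x in (0:ℝ)..1, (deriv υ x) ^ 2 := ⟨_, rfl⟩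
  obtain ⟨I0, hI0def⟩ : ∃ r : ℝ, r = ∫ x in (0:ℝ)..1, (υ x) ^ 2 := ⟨_, rfl⟩
  have iI2 : IntervalIntegrable (fun x => (deriv (deriv υ) x) ^ 2) volume 0 1 :=
    (cu''.pow 2).intervalIntegrable 0 1
  have iI1 : IntervalIntegrable (fun x => (deriv υ x) ^ 2) volume 0 1 :=
    (cu'.pow 2).intervalIntegrable 0 1
  have iI0 : IntervalIntegrable (fun x => (υ x) ^ 2) volume 0 1 :=
    (cu.pow 2).intervalIntegrable 0 1
  have iI2c : ∀ a : ℝ, IntervalIntegrable (fun x => a * (deriv (deriv υ) x) ^ 2) volume 0 1 :=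
    fun a => iI2.const_mul a
  have iI1c : ∀ a : ℝ, IntervalIntegrable (fun x => a * (deriv υ x) ^ 2) volume 0 1 :=
    fun a => iI1.const_mul a
  have iI0c : ∀ a : ℝ, IntervalIntegrable (fun x => a * (υ x) ^ 2) volume 0 1 :=
    fun a => iI0.const_mul a
  have hI2 : 0 ≤ I2 := hI2def ▸ intervalIntegral.integral_nonneg (by norm_num) (fun x _ => sq_nonneg _)
  have hI1 : 0 ≤ I1 := hI1def ▸ intervalIntegral.integral_nonneg (by norm_num) (fun x _ => sq_nonneg _)
  have hI0 : 0 ≤ I0 := hI0def ▸ intervalIntegral.integral_nonneg (by norm_num) (fun x _ => sq_nonneg _)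
  -- right-hand side integral decomposition
  have eqR : (∫ x in (0:ℝ)..1,
        (δ * ε ^ 2 * (deriv (deriv υ) x) ^ 2
          + (δ + μ * ε ^ 2) * (deriv υ x) ^ 2
          + (δ + μ) * (υ x) ^ 2))
      = δ * ε ^ 2 * I2 + (δ + μ * ε ^ 2) * I1 + (δ + μ) * I0 := by
    rw [hI2def, hI1def, hI0def,
      intervalIntegral.integral_add ((iI2.const_mul _).add (iI1.const_mul _)) (iI0.const_mul _),
      intervalIntegral.integral_add (iI2.const_mul _) (iI1.const_mul _),
      intervalIntegral.integral_const_mul, intervalIntegral.integral_const_mul,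
      intervalIntegral.integral_const_mul]
  -- split the left-hand side integral
  have eqJ2 : (∫ x in (0:ℝ)..1, (ε ^ 2 * (deriv υ x) ^ 2 + (υ x) ^ 2))
      = ε ^ 2 * I1 + I0 := by
    rw [hI1def, hI0def,
      intervalIntegral.integral_add (iI1.const_mul _) iI0,
      intervalIntegral.integral_const_mul]
  obtain ⟨J1, hJ1def⟩ : ∃ r : ℝ, r = ∫ x in (0:ℝ)..1, (ε ^ 2 * (deriv υ x) ^ 2 + g x * (υ x) ^ 2) := ⟨_, rfl⟩
  have hcoer2 : J1 ≥ Λ * (ε ^ 2 * I1 + I0) := by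
    rw [hJ1def, ← eqJ2]
    exact hcoer
  have iJ1 : IntervalIntegrable (fun x => ε ^ 2 * (deriv υ x) ^ 2 + g x * (υ x) ^ 2) volume 0 1 :=
    ((continuous_const.mul (cu'.pow 2)).add (cg.mul (cu.pow 2))).intervalIntegrable 0 1
  have iChunk : IntervalIntegrable (fun x => δ * (ε ^ 2 * (deriv (deriv υ) x) ^ 2
      + g x * (deriv υ x) ^ 2 - 1 / 2 * deriv (deriv g) x * (υ x) ^ 2)) volume 0 1 :=
    (continuous_const.mul (((continuous_const.mul (cu''.pow 2)).add
      (cg.mul (cu'.pow 2))).sub ((continuous_const.mul cg'').mul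
      (cu.pow 2)))).intervalIntegrable 0 1
  have eqL : (∫ x in (0:ℝ)..1,
        (δ * (ε ^ 2 * (deriv (deriv υ) x) ^ 2 + g x * (deriv υ x) ^ 2
            - 1 / 2 * deriv (deriv g) x * (υ x) ^ 2)
          + μ * (ε ^ 2 * (deriv υ x) ^ 2 + g x * (υ x) ^ 2)))
      = (∫ x in (0:ℝ)..1, δ * (ε ^ 2 * (deriv (deriv υ) x) ^ 2 + g x * (deriv υ x) ^ 2
            - 1 / 2 * deriv (deriv g) x * (υ x) ^ 2)) + μ * J1 := by
    rw [hJ1def, intervalIntegral.integral_add iChunk (iJ1.const_mul _),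
      intervalIntegral.integral_const_mul, intervalIntegral.integral_const_mul]
  -- lower bound on the chunk, pointwise
  have iLow : IntervalIntegrable (fun x => δ * ε ^ 2 * (deriv (deriv υ) x) ^ 2
      - δ * c * (deriv υ x) ^ 2 - 1 / 2 * (δ * c / ε ^ 2) * (υ x) ^ 2) volume 0 1 :=
    (((continuous_const.mul (cu''.pow 2)).sub (continuous_const.mul (cu'.pow 2))).sub
      (continuous_const.mul (cu.pow 2))).intervalIntegrable 0 1
  have chunkLB : (∫ x in (0:ℝ)..1, δ * (ε ^ 2 * (deriv (deriv υ) x) ^ 2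
        + g x * (deriv υ x) ^ 2 - 1 / 2 * deriv (deriv g) x * (υ x) ^ 2))
      ≥ δ * ε ^ 2 * I2 - δ * c * I1 - 1 / 2 * (δ * c / ε ^ 2) * I0 := by
    have step : (∫ x in (0:ℝ)..1, (δ * ε ^ 2 * (deriv (deriv υ) x) ^ 2
        - δ * c * (deriv υ x) ^ 2 - 1 / 2 * (δ * c / ε ^ 2) * (υ x) ^ 2))
        ≤ ∫ x in (0:ℝ)..1, δ * (ε ^ 2 * (deriv (deriv υ) x) ^ 2
          + g x * (deriv υ x) ^ 2 - 1 / 2 * deriv (deriv g) x * (υ x) ^ 2) := by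
      apply intervalIntegral.integral_mono_on (by norm_num) iLow iChunk
      intro x hx
      have h1 := abs_le.mp (hgb x hx)
      have h2 := abs_le.mp (hg2 x hx)
      have e1 : 0 ≤ δ * (g x + c) * (deriv υ x) ^ 2 := by
        apply mul_nonneg (mul_nonneg hδ.le (by linarith [h1.1])) (sq_nonneg _)
      have e2 : 0 ≤ δ * (c / ε ^ 2 - deriv (deriv g) x) * (υ x) ^ 2 := by
        apply mul_nonneg (mul_nonneg hδ.le (by linarith [h2.2])) (sq_nonneg _)
      have hdc : δ * (c / ε ^ 2) = δ * c / ε ^ 2 := by ring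
      nlinarith [e1, e2]
    have eqlow : (∫ x in (0:ℝ)..1, (δ * ε ^ 2 * (deriv (deriv υ) x) ^ 2
        - δ * c * (deriv υ x) ^ 2 - 1 / 2 * (δ * c / ε ^ 2) * (υ x) ^ 2))
        = δ * ε ^ 2 * I2 - δ * c * I1 - 1 / 2 * (δ * c / ε ^ 2) * I0 := by
      rw [hI2def, hI1def, hI0def,
        intervalIntegral.integral_sub ((iI2.const_mul _).sub (iI1.const_mul _)) (iI0.const_mul _),
        intervalIntegral.integral_sub (iI2.const_mul _) (iI1.const_mul _),
        intervalIntegral.integral_const_mul, intervalIntegral.integral_const_mul,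
        intervalIntegral.integral_const_mul]
    linarith [step, eqlow.symm.le]
  -- scalar inequalities
  have hΛC : 0 < Λ - C := by linarith
  have hkey : (Λ - C) * (μ * ε ^ 2) ≥ (c + C) * δ := by
    have h := mul_le_mul_of_nonneg_left hcond hΛC.le
    have h2 : (Λ - C) * ((c + C) / (Λ - C) * δ) = (c + C) * δ := by
      field_simp
    linarith [h, h2.symm.le]
  have hT0 : 0 ≤ (Λ - C) * μ - 1 / 2 * (δ * c / ε ^ 2) - C * δ := by
    have h2 : ((Λ - C) * μ - 1 / 2 * (δ * c / ε ^ 2) - C * δ) * ε ^ 2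
        = (Λ - C) * (μ * ε ^ 2) - 1 / 2 * (δ * c) - C * δ * ε ^ 2 := by
      field_simp
    have hε2le : ε ^ 2 ≤ 1 := by nlinarith
    have h3 : C * δ * ε ^ 2 ≤ C * δ :=
      mul_le_of_le_one_right (by positivity) hε2le
    have h4 : 0 ≤ ((Λ - C) * μ - 1 / 2 * (δ * c / ε ^ 2) - C * δ) * ε ^ 2 := by
      rw [h2]
      nlinarith [hkey]
    by_contra hX
    push_neg at hX
    have h5 := mul_neg_of_neg_of_pos hX hε2
    linarith
  have hcoer' : μ * J1 ≥ μ * Λ * (ε ^ 2 * I1 + I0) := by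
    have := mul_le_mul_of_nonneg_left hcoer2 hμ.le
    linarith [this]
  rw [eqL, eqR]
  have m2 : 0 ≤ (1 - C) * (δ * ε ^ 2) * I2 := by
    apply mul_nonneg (mul_nonneg (by linarith) (by positivity)) hI2
  have m1 : 0 ≤ ((Λ - C) * (μ * ε ^ 2) - (c + C) * δ) * I1 := by
    apply mul_nonneg (by linarith [hkey]) hI1
  have m0 : 0 ≤ ((Λ - C) * μ - 1 / 2 * (δ * c / ε ^ 2) - C * δ) * I0 := mul_nonneg hT0 hI0
  nlinarith [chunkLB, hcoer', m2, m1, m0]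
end

section
/- Let ε > 0 and let υ : [0,1] → ℝ be continuously differentiable. Then sup_{x ∈ [0,1]} υ(x)² ≤ ((1 + ε)/ε) · ∫₀¹ (ε²·υ'(x)² + υ(x)²) dx. -/
/-!
For `x, y ∈ [0, 1]` the fundamental theorem of calculus applied to `υ²` gives
`υ(x)² ≤ υ(y)² + ∫₀¹ |2 υ υ'|`; averaging over `y` bounds `υ(x)²` by `∫₀¹ υ² + ∫₀¹ |2 υ υ'|`.
The weighted AM-GM inequality `|2 υ υ'| ≤ (ε² υ'² + υ²) / ε` then bounds the second
integral by `B_ε[υ] / ε` and the first one trivially by `B_ε[υ]`.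
-/

open Set

theorem le_add_integral_abs_deriv {g g' : ℝ → ℝ} {a b x y : ℝ}
    (hg : ∀ t, HasDerivAt g (g' t) t) (hg' : IntervalIntegrable g' MeasureTheory.volume a b)
    (hx : x ∈ Icc a b) (hy : y ∈ Icc a b) :
    g x ≤ g y + ∫ t in a..b, |g' t| := by
  have hsub : uIcc y x ⊆ uIcc a b :=
    uIcc_subset_uIcc (Icc_subset_uIcc hy) (Icc_subset_uIcc hx)
  have hftc : g x - g y = ∫ t in y..x, g' t :=
    (intervalIntegral.integral_eq_sub_of_hasDerivAt (fun t _ => hg t) (hg'.mono_set hsub)).symm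
  have hnonneg : 0 ≤ ∫ t in a..b, |g' t| :=
    intervalIntegral.integral_nonneg (hx.1.trans hx.2) fun t _ => abs_nonneg _
  have key : g x - g y ≤ ∫ t in a..b, |g' t| :=
    calc g x - g y ≤ |∫ t in y..x, g' t| := hftc ▸ le_abs_self _
      _ ≤ |(∫ t in y..x, |g' t|)| :=
          intervalIntegral.norm_integral_le_abs_integral_norm (f := g')
      _ ≤ |(∫ t in a..b, |g' t|)| :=
          intervalIntegral.abs_integral_mono_interval
            (uIoc_subset_uIoc_of_uIcc_subset_uIcc hsub)
            (Filter.Eventually.of_forall fun t => abs_nonneg _) hg'.abs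
      _ = ∫ t in a..b, |g' t| := abs_of_nonneg hnonneg
  linarith

theorem sq_le_integral_sq_add_integral_abs_two_mul_deriv {υ : ℝ → ℝ} (hυ : ContDiff ℝ 1 υ)
    {x : ℝ} (hx : x ∈ Icc (0 : ℝ) 1) :
    υ x ^ 2 ≤ (∫ y in (0 : ℝ)..1, υ y ^ 2) + ∫ t in (0 : ℝ)..1, |2 * υ t * deriv υ t| := by
  have hderiv : ∀ t, HasDerivAt (fun s => υ s ^ 2) (2 * υ t * deriv υ t) t := fun t => by
    simpa using (hυ.differentiable one_ne_zero t).hasDerivAt.fun_pow 2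
  have hcont : Continuous fun t => 2 * υ t * deriv υ t :=
    (continuous_const.mul hυ.continuous).mul (hυ.continuous_deriv le_rfl)
  have hsq : Continuous fun t => υ t ^ 2 := hυ.continuous.pow 2
  calc υ x ^ 2 = ∫ _ in (0 : ℝ)..1, υ x ^ 2 := by simp
    _ ≤ ∫ y in (0 : ℝ)..1, (υ y ^ 2 + ∫ t in (0 : ℝ)..1, |2 * υ t * deriv υ t|) :=
        intervalIntegral.integral_mono_on zero_le_one intervalIntegrable_const
          ((hsq.add continuous_const).intervalIntegrable 0 1) fun y hy =>
            le_add_integral_abs_deriv hderiv (hcont.intervalIntegrable 0 1) hx hy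
    _ = _ := by
        rw [intervalIntegral.integral_add (hsq.intervalIntegrable 0 1) intervalIntegrable_const]
        simp

theorem abs_two_mul_mul_le_div {ε : ℝ} (hε : 0 < ε) (u v : ℝ) :
    |2 * u * v| ≤ (ε ^ 2 * v ^ 2 + u ^ 2) / ε := by
  have h := two_mul_le_add_sq (ε * |v|) |u|
  rw [mul_pow, sq_abs, sq_abs] at h
  rw [le_div_iff₀ hε, abs_mul, abs_mul, abs_two]
  linarith

theorem stmt_4 (ε : ℝ) (hε : 0 < ε) (υ : ℝ → ℝ) (hυ : ContDiff ℝ 1 υ) :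
    ∀ x ∈ Icc (0:ℝ) 1,
      (υ x) ^ 2 ≤ (1 + ε) / ε *
        ∫ y in (0:ℝ)..1, (ε ^ 2 * (deriv υ y) ^ 2 + (υ y) ^ 2) := by
  intro x hx
  set B := ∫ y in (0:ℝ)..1, (ε ^ 2 * (deriv υ y) ^ 2 + (υ y) ^ 2)
  have hυ₀ : Continuous υ := hυ.continuous
  have hυ₁ : Continuous (deriv υ) := hυ.continuous_deriv le_rfl
  have hB : Continuous fun y => ε ^ 2 * deriv υ y ^ 2 + υ y ^ 2 := by fun_prop
  have hcross : Continuous fun t => |2 * υ t * deriv υ t| := by fun_prop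
  have hsq_le : ∫ y in (0 : ℝ)..1, υ y ^ 2 ≤ B :=
    intervalIntegral.integral_mono_on zero_le_one ((hυ₀.pow 2).intervalIntegrable 0 1)
      (hB.intervalIntegrable 0 1) fun y _ => le_add_of_nonneg_left (by positivity)
  have hcross_le : ∫ t in (0 : ℝ)..1, |2 * υ t * deriv υ t| ≤ B / ε := by
    rw [← intervalIntegral.integral_div]
    exact intervalIntegral.integral_mono_on zero_le_one (hcross.intervalIntegrable 0 1)
      ((hB.div_const ε).intervalIntegrable 0 1) fun t _ => abs_two_mul_mul_le_div hε _ _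
  calc υ x ^ 2 ≤ B + B / ε := (sq_le_integral_sq_add_integral_abs_two_mul_deriv hυ hx).trans
        (add_le_add hsq_le hcross_le)
    _ = (1 + ε) / ε * B := by field_simp; ring
end

section
/- Fix ε > 0, δ > 0, μ ≥ 0, T > 0, and let f(u) = u³ − u with F(u) = ¼(u² − 1)², so F' = f. Let u : [0,1] × [0,T] → ℝ be smooth and satisfy u_t = −δ·(ε²u_xx − f(u))_xx + μ·(ε²u_xx − f(u)) on (0,1) × (0,T), with boundary conditions u_x(0,t) = u_x(1,t) = 0 and u_xxx(0,t) = 0 for all t. Define E(t) := ∫₀¹ (½·ε²·u_x(x,t)² + F(u(x,t))) dx. Then for every t ∈ (0,T): dE/dt = −δ·∫₀¹ [(ε²u_xx − f(u))_x(x,t)]² dx − μ·∫₀¹ (ε²u_xx(x,t) − f(u(x,t)))² dx + δ·ε²·u_xxx(1,t)·(ε²·u_xx(1,t) − f(u(1,t))). -/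
open Set

noncomputable def fCH (u : ℝ) : ℝ := u ^ 3 - u

noncomputable def FCH (u : ℝ) : ℝ := 1 / 4 * (u ^ 2 - 1) ^ 2

noncomputable def pdx (g : ℝ × ℝ → ℝ) : ℝ × ℝ → ℝ := fun p => fderiv ℝ g p (1, 0)
noncomputable def pdt (g : ℝ × ℝ → ℝ) : ℝ × ℝ → ℝ := fun p => fderiv ℝ g p (0, 1)

lemma contDiff_pdx {g : ℝ × ℝ → ℝ} (hg : ContDiff ℝ (⊤ : ℕ∞) g) : ContDiff ℝ (⊤ : ℕ∞) (pdx g) :=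
  (hg.fderiv_right (by simp)).clm_apply contDiff_const

lemma contDiff_pdt {g : ℝ × ℝ → ℝ} (hg : ContDiff ℝ (⊤ : ℕ∞) g) : ContDiff ℝ (⊤ : ℕ∞) (pdt g) :=
  (hg.fderiv_right (by simp)).clm_apply contDiff_const

lemma hasDerivAt_slice_x {g : ℝ × ℝ → ℝ} (hg : ContDiff ℝ (⊤ : ℕ∞) g) (t x : ℝ) :
    HasDerivAt (fun y => g (y, t)) (pdx g (x, t)) x := by
  have h1 : HasDerivAt (fun y : ℝ => ((y, t) : ℝ × ℝ)) ((1 : ℝ), (0 : ℝ)) x :=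
    (hasDerivAt_id x).prodMk (hasDerivAt_const x t)
  exact ((hg.differentiable (by simp) (x, t)).hasFDerivAt).comp_hasDerivAt x h1

lemma hasDerivAt_slice_t {g : ℝ × ℝ → ℝ} (hg : ContDiff ℝ (⊤ : ℕ∞) g) (x t : ℝ) :
    HasDerivAt (fun s => g (x, s)) (pdt g (x, t)) t := by
  have h1 : HasDerivAt (fun s : ℝ => ((x, s) : ℝ × ℝ)) ((0 : ℝ), (1 : ℝ)) t :=
    (hasDerivAt_const t x).prodMk (hasDerivAt_id t)
  exact ((hg.differentiable (by simp) (x, t)).hasFDerivAt).comp_hasDerivAt t h1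

lemma pdx_pdt_comm {g : ℝ × ℝ → ℝ} (hg : ContDiff ℝ (⊤ : ℕ∞) g) : pdx (pdt g) = pdt (pdx g) := by
  funext p
  have hd : DifferentiableAt ℝ (fderiv ℝ g) p :=
    ((hg.fderiv_right (m := (⊤ : ℕ∞)) (by simp)).differentiable (by simp)) p
  have key : ∀ v w : ℝ × ℝ, fderiv ℝ (fun q => fderiv ℝ g q v) p w
      = fderiv ℝ (fderiv ℝ g) p w v := by
    intro v w
    rw [fderiv_clm_apply hd (differentiableAt_const v)]
    simp
  have hsymm : IsSymmSndFDerivAt ℝ g p := hg.contDiffAt.isSymmSndFDerivAt (by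
    rw [minSmoothness_of_isRCLikeNormedField]; exact WithTop.coe_le_coe.mpr (le_top : (2:ℕ∞) ≤ ⊤))
  show fderiv ℝ (fun q => fderiv ℝ g q (0,1)) p (1,0) = fderiv ℝ (fun q => fderiv ℝ g q (1,0)) p (0,1)
  rw [key, key]
  exact hsymm (1,0) (0,1)

lemma hasDerivAt_FCH (y : ℝ) : HasDerivAt FCH (fCH y) y := by
  have h1 : HasDerivAt (fun y : ℝ => y ^ 2 - 1) (2 * y) y := by
    simpa using (hasDerivAt_pow 2 y).sub_const 1
  have h2 := (h1.fun_pow 2).const_mul (1 / 4 : ℝ)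
  refine h2.congr_deriv ?_
  simp only [fCH]
  push_cast
  ring

lemma hasDerivAt_fCH (y : ℝ) : HasDerivAt fCH (3 * y ^ 2 - 1) y := by
  unfold fCH; simpa using (hasDerivAt_pow 3 y).fun_sub (hasDerivAt_id y)

lemma contDiff_fCH : ContDiff ℝ (⊤ : ℕ∞) fCH := by
  unfold fCH; fun_prop

lemma contDiff_FCH : ContDiff ℝ (⊤ : ℕ∞) FCH := by
  unfold FCH; fun_prop

theorem stmt_13 (ε δ μ T : ℝ) (hε : 0 < ε) (hδ : 0 < δ) (hμ : 0 ≤ μ) (hT : 0 < T)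
    (u : ℝ → ℝ → ℝ) (hu : ContDiff ℝ (⊤ : ℕ∞) (Function.uncurry u))
    (hEq : ∀ x ∈ Ioo (0:ℝ) 1, ∀ t ∈ Ioo (0:ℝ) T,
      deriv (fun s => u x s) t =
        -δ * deriv (deriv (fun y =>
            ε ^ 2 * deriv (deriv (fun z => u z t)) y - fCH (u y t))) x
        + μ * (ε ^ 2 * deriv (deriv (fun y => u y t)) x - fCH (u x t)))
    (hbc1 : ∀ t ∈ Icc (0:ℝ) T, deriv (fun y => u y t) 0 = 0)
    (hbc2 : ∀ t ∈ Icc (0:ℝ) T, deriv (fun y => u y t) 1 = 0)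
    (hbc3 : ∀ t ∈ Icc (0:ℝ) T, iteratedDeriv 3 (fun y => u y t) 0 = 0)
    (E : ℝ → ℝ)
    (hE : E = fun t => ∫ x in (0:ℝ)..1,
      (1 / 2 * ε ^ 2 * (deriv (fun y => u y t) x) ^ 2 + FCH (u x t))) :
    ∀ t ∈ Ioo (0:ℝ) T,
      deriv E t =
        -δ * (∫ x in (0:ℝ)..1,
            (deriv (fun y =>
              ε ^ 2 * deriv (deriv (fun z => u z t)) y - fCH (u y t)) x) ^ 2)
        - μ * (∫ x in (0:ℝ)..1,
            (ε ^ 2 * deriv (deriv (fun y => u y t)) x - fCH (u x t)) ^ 2)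
        + δ * ε ^ 2 * iteratedDeriv 3 (fun y => u y t) 1 *
            (ε ^ 2 * deriv (deriv (fun y => u y t)) 1 - fCH (u 1 t)) := by
  intro t ht
  have hT01 : t ∈ Icc (0:ℝ) T := ⟨le_of_lt ht.1, le_of_lt ht.2⟩
  set U : ℝ × ℝ → ℝ := Function.uncurry u with hUdef
  have hUs : ContDiff ℝ (⊤ : ℕ∞) U := hu
  -- rewriting of one-variable derivatives in terms of partial derivatives
  have hux : ∀ s x : ℝ, deriv (fun y => u y s) x = pdx U (x, s) := fun s x =>
    (hasDerivAt_slice_x hUs s x).deriv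
  have huxfun : ∀ s : ℝ, (deriv (fun y => u y s)) = fun y => pdx U (y, s) := fun s =>
    funext (hux s)
  have hux2 : ∀ s x : ℝ, deriv (deriv (fun y => u y s)) x = pdx (pdx U) (x, s) := by
    intro s x
    rw [huxfun s]
    exact (hasDerivAt_slice_x (contDiff_pdx hUs) s x).deriv
  have hux2fun : ∀ s : ℝ, (deriv (deriv (fun y => u y s))) = fun y => pdx (pdx U) (y, s) :=
    fun s => funext (hux2 s)
  have hux3 : ∀ s x : ℝ, iteratedDeriv 3 (fun y => u y s) x = pdx (pdx (pdx U)) (x, s) := by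
    intro s x
    rw [show (3:ℕ) = 2 + 1 from rfl, iteratedDeriv_succ,
      show (2:ℕ) = 1 + 1 from rfl, iteratedDeriv_succ, iteratedDeriv_one, hux2fun s]
    exact (hasDerivAt_slice_x (contDiff_pdx (contDiff_pdx hUs)) s x).deriv
  have hut : ∀ x s : ℝ, deriv (fun s' => u x s') s = pdt U (x, s) := fun x s =>
    (hasDerivAt_slice_t hUs x s).deriv
  -- the chemical potential
  set w : ℝ × ℝ → ℝ := fun p => ε ^ 2 * pdx (pdx U) p - fCH (U p) with hwdef
  have hws : ContDiff ℝ (⊤ : ℕ∞) w :=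
    (contDiff_const.mul (contDiff_pdx (contDiff_pdx hUs))).sub (contDiff_fCH.comp hUs)
  have hwapp : ∀ x s : ℝ, w (x, s) = ε ^ 2 * pdx (pdx U) (x, s) - fCH (u x s) :=
    fun _ _ => rfl
  have hwfun : ∀ s : ℝ, (fun y => ε ^ 2 * deriv (deriv (fun z => u z s)) y - fCH (u y s))
      = fun y => w (y, s) := by
    intro s; funext y; rw [hux2, hwapp]
  have hwx : ∀ s x : ℝ, deriv (fun y => w (y, s)) x = pdx w (x, s) := fun s x =>
    (hasDerivAt_slice_x hws s x).deriv
  have hwxfun : ∀ s : ℝ, (deriv (fun y => w (y, s))) = fun x => pdx w (x, s) :=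
    fun s => funext (hwx s)
  have hwx2 : ∀ s x : ℝ, deriv (deriv (fun y => w (y, s))) x = pdx (pdx w) (x, s) := by
    intro s x
    rw [hwxfun s]
    exact (hasDerivAt_slice_x (contDiff_pdx hws) s x).deriv
  -- continuity facts
  have cU : Continuous U := hUs.continuous
  have cUx : Continuous (pdx U) := (contDiff_pdx hUs).continuous
  have cUxx : Continuous (pdx (pdx U)) := (contDiff_pdx (contDiff_pdx hUs)).continuous
  have cUt : Continuous (pdt U) := (contDiff_pdt hUs).continuous
  have cUxt : Continuous (pdt (pdx U)) := (contDiff_pdt (contDiff_pdx hUs)).continuous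
  have cUtx : Continuous (pdx (pdt U)) := (contDiff_pdx (contDiff_pdt hUs)).continuous
  have cw : Continuous w := hws.continuous
  have cwx : Continuous (pdx w) := (contDiff_pdx hws).continuous
  have cwxx : Continuous (pdx (pdx w)) := (contDiff_pdx (contDiff_pdx hws)).continuous
  have cfCH : Continuous fCH := contDiff_fCH.continuous
  have cslice : Continuous (fun x : ℝ => ((x, t) : ℝ × ℝ)) :=
    continuous_id.prodMk continuous_const
  have csl : ∀ {g : ℝ × ℝ → ℝ}, Continuous g → Continuous (fun x : ℝ => g (x, t)) :=
    fun hg => hg.comp cslice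
  -- the PDE in terms of partial derivatives, on the open rectangle
  have hPDEo : ∀ p ∈ Ioo (0:ℝ) 1 ×ˢ Ioo (0:ℝ) T,
      pdt U p = -δ * pdx (pdx w) p + μ * w p := by
    rintro ⟨x, s⟩ ⟨hx, hs⟩
    have h := hEq x hx s hs
    rw [hut x s, hwfun s, hwx2 s x, hux2 s x, ← hwapp x s] at h
    exact h
  -- extend the PDE to the closed rectangle by continuity
  have hPDEc : ∀ x ∈ Icc (0:ℝ) 1, pdt U (x, t) = -δ * pdx (pdx w) (x, t) + μ * w (x, t) := by
    intro x hx
    have hcont2 : Continuous (fun p => -δ * pdx (pdx w) p + μ * w p) :=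
      (continuous_const.mul cwxx).add (continuous_const.mul cw)
    have hEqOn : EqOn (pdt U) (fun p => -δ * pdx (pdx w) p + μ * w p)
        (Ioo (0:ℝ) 1 ×ˢ Ioo (0:ℝ) T) := fun p hp => hPDEo p hp
    have hclos : closure (Ioo (0:ℝ) 1 ×ˢ Ioo (0:ℝ) T) = Icc 0 1 ×ˢ Icc 0 T := by
      rw [closure_prod_eq, closure_Ioo (by norm_num : (0:ℝ) ≠ 1), closure_Ioo hT.ne]
    exact (hEqOn.closure cUt hcont2) (by rw [hclos]; exact ⟨hx, hT01⟩)
  -- formula for the x-derivative of w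
  have hwx_formula : ∀ s x : ℝ, pdx w (x, s)
      = ε ^ 2 * pdx (pdx (pdx U)) (x, s) - (3 * U (x, s) ^ 2 - 1) * pdx U (x, s) := by
    intro s x
    have ha := (hasDerivAt_slice_x (contDiff_pdx (contDiff_pdx hUs)) s x).const_mul (ε ^ 2)
    have hb := (hasDerivAt_fCH (U (x, s))).comp x (hasDerivAt_slice_x hUs s x)
    have h1 : HasDerivAt (fun y => w (y, s))
        (ε ^ 2 * pdx (pdx (pdx U)) (x, s) - (3 * U (x, s) ^ 2 - 1) * pdx U (x, s)) x := by
      simpa [hwdef, Function.comp] using ha.fun_sub hb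
    exact (hasDerivAt_slice_x hws s x).unique h1
  -- boundary values
  have hbx0 : pdx U (0, t) = 0 := by rw [← hux t 0]; exact hbc1 t hT01
  have hbx1 : pdx U (1, t) = 0 := by rw [← hux t 1]; exact hbc2 t hT01
  have hux3_0 : pdx (pdx (pdx U)) (0, t) = 0 := by rw [← hux3 t 0]; exact hbc3 t hT01
  have hwx0 : pdx w (0, t) = 0 := by rw [hwx_formula, hbx0, hux3_0]; ring
  have hwx1 : pdx w (1, t) = ε ^ 2 * pdx (pdx (pdx U)) (1, t) := by
    rw [hwx_formula, hbx1]; ring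
  -- the energy density and its time derivative
  set φ : ℝ × ℝ → ℝ := fun p => 1 / 2 * ε ^ 2 * pdx U p ^ 2 + FCH (U p) with hφdef
  set ψ : ℝ × ℝ → ℝ := fun p => ε ^ 2 * pdx U p * pdt (pdx U) p + fCH (U p) * pdt U p
    with hψdef
  have hφc : Continuous φ := by
    rw [hφdef]
    exact (continuous_const.mul (cUx.pow 2)).add (contDiff_FCH.continuous.comp cU)
  have hψc : Continuous ψ := by
    rw [hψdef]
    exact ((continuous_const.mul cUx).mul cUxt).add ((cfCH.comp cU).mul cUt)
  have hψder : ∀ x s : ℝ, HasDerivAt (fun s' => φ (x, s')) (ψ (x, s)) s := by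
    intro x s
    have h1 := hasDerivAt_slice_t (contDiff_pdx hUs) x s
    have h2 := hasDerivAt_slice_t hUs x s
    have ha := (h1.pow 2).const_mul (1 / 2 * ε ^ 2)
    have hb := (hasDerivAt_FCH (U (x, s))).comp s h2
    have h : HasDerivAt (fun s' => φ (x, s'))
        (1 / 2 * ε ^ 2 * ((2 : ℕ) * pdx U (x, s) ^ 1 * pdt (pdx U) (x, s))
          + fCH (U (x, s)) * pdt U (x, s)) s := by
      exact ha.fun_add hb
    convert h using 1
    simp only [hψdef]
    push_cast
    ring
  -- E rewritten
  have hEint : E = fun s => ∫ x in (0:ℝ)..1, φ (x, s) := by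
    rw [hE]; funext s
    apply intervalIntegral.integral_congr
    intro x _
    show 1 / 2 * ε ^ 2 * deriv (fun y => u y s) x ^ 2 + FCH (u x s) = φ (x, s)
    rw [hux s x]
    rfl
  -- differentiation under the integral sign
  have hEderiv : HasDerivAt E (∫ x in (0:ℝ)..1, ψ (x, t)) t := by
    obtain ⟨C, hC⟩ : ∃ C, ∀ p ∈ Icc (0:ℝ) 1 ×ˢ Icc (t - 1) (t + 1), ‖ψ p‖ ≤ C :=
      (isCompact_Icc.prod isCompact_Icc).exists_bound_of_continuousOn hψc.continuousOn
    rw [hEint]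
    have key := intervalIntegral.hasDerivAt_integral_of_dominated_loc_of_deriv_le
      (F := fun s x => φ (x, s)) (F' := fun s x => ψ (x, s)) (x₀ := t)
      (bound := fun _ => C) (a := 0) (b := 1) (μ := MeasureTheory.volume)
      (Metric.ball_mem_nhds t one_pos)
      (Filter.Eventually.of_forall fun s =>
        ((hφc.comp (continuous_id.prodMk continuous_const)).aestronglyMeasurable))
      ((hφc.comp cslice).intervalIntegrable 0 1)
      ((hψc.comp cslice).aestronglyMeasurable)
      (Filter.Eventually.of_forall fun x hx => ?_)
      (intervalIntegrable_const)
      (Filter.Eventually.of_forall fun x _ s _ => hψder x s)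
    · exact key.2
    · intro s hs
      apply hC
      constructor
      · have hx' : x ∈ Ioc (0:ℝ) 1 := by rwa [Set.uIoc_of_le (by norm_num : (0:ℝ) ≤ 1)] at hx
        exact ⟨le_of_lt hx'.1, hx'.2⟩
      · have := Metric.mem_ball.mp hs
        rw [Real.dist_eq] at this
        have h2 := abs_lt.mp this
        exact ⟨by linarith [h2.1], by linarith [h2.2]⟩
  -- integrability of the slices
  have int_fCHUt : IntervalIntegrable (fun x => fCH (U (x, t)) * pdt U (x, t))
      MeasureTheory.volume 0 1 :=
    (((cfCH.comp cU).mul cUt).comp cslice).intervalIntegrable 0 1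
  have int_uxuxt : IntervalIntegrable (fun x => (ε ^ 2 * pdx U (x, t)) * pdx (pdt U) (x, t))
      MeasureTheory.volume 0 1 :=
    (((continuous_const.mul cUx).mul cUtx).comp cslice).intervalIntegrable 0 1
  have int_uxxut : IntervalIntegrable (fun x => (ε ^ 2 * pdx (pdx U) (x, t)) * pdt U (x, t))
      MeasureTheory.volume 0 1 :=
    (((continuous_const.mul cUxx).mul cUt).comp cslice).intervalIntegrable 0 1
  have int_wwxx : IntervalIntegrable (fun x => -δ * (w (x, t) * pdx (pdx w) (x, t)))
      MeasureTheory.volume 0 1 :=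
    ((continuous_const.mul (cw.mul cwxx)).comp cslice).intervalIntegrable 0 1
  have int_wsq : IntervalIntegrable (fun x => μ * w (x, t) ^ 2)
      MeasureTheory.volume 0 1 :=
    ((continuous_const.mul (cw.pow 2)).comp cslice).intervalIntegrable 0 1
  -- first integration by parts
  have hibp1 : (∫ x in (0:ℝ)..1, (ε ^ 2 * pdx U (x, t)) * pdx (pdt U) (x, t))
      = (ε ^ 2 * pdx U (1, t)) * pdt U (1, t) - (ε ^ 2 * pdx U (0, t)) * pdt U (0, t)
        - ∫ x in (0:ℝ)..1, (ε ^ 2 * pdx (pdx U) (x, t)) * pdt U (x, t) :=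
    intervalIntegral.integral_mul_deriv_eq_deriv_mul
      (fun x _ => (hasDerivAt_slice_x (contDiff_pdx hUs) t x).const_mul (ε ^ 2))
      (fun x _ => hasDerivAt_slice_x (contDiff_pdt hUs) t x)
      (((csl (continuous_const.mul cUxx))).intervalIntegrable 0 1)
      ((csl cUtx).intervalIntegrable 0 1)
  have hI2 : (∫ x in (0:ℝ)..1, ψ (x, t)) = - ∫ x in (0:ℝ)..1, w (x, t) * pdt U (x, t) := by
    have e1 : ∀ x : ℝ, ψ (x, t)
        = (ε ^ 2 * pdx U (x, t)) * pdx (pdt U) (x, t) + fCH (U (x, t)) * pdt U (x, t) := by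
      intro x; simp only [hψdef]; rw [← pdx_pdt_comm hUs]
    calc (∫ x in (0:ℝ)..1, ψ (x, t))
        = (∫ x in (0:ℝ)..1, (ε ^ 2 * pdx U (x, t)) * pdx (pdt U) (x, t))
          + ∫ x in (0:ℝ)..1, fCH (U (x, t)) * pdt U (x, t) := by
          rw [← intervalIntegral.integral_add int_uxuxt int_fCHUt]
          exact intervalIntegral.integral_congr fun x _ => e1 x
      _ = (∫ x in (0:ℝ)..1, fCH (U (x, t)) * pdt U (x, t))
          - ∫ x in (0:ℝ)..1, (ε ^ 2 * pdx (pdx U) (x, t)) * pdt U (x, t) := by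
          rw [hibp1, hbx0, hbx1]; ring
      _ = ∫ x in (0:ℝ)..1,
            (fCH (U (x, t)) * pdt U (x, t) - (ε ^ 2 * pdx (pdx U) (x, t)) * pdt U (x, t)) :=
          (intervalIntegral.integral_sub int_fCHUt int_uxxut).symm
      _ = - ∫ x in (0:ℝ)..1, w (x, t) * pdt U (x, t) := by
          rw [← intervalIntegral.integral_neg]
          apply intervalIntegral.integral_congr
          intro x _
          show fCH (U (x, t)) * pdt U (x, t) - (ε ^ 2 * pdx (pdx U) (x, t)) * pdt U (x, t)
            = -(w (x, t) * pdt U (x, t))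
          simp only [hwdef]
          ring
  -- substitute the PDE
  have hI3 : (∫ x in (0:ℝ)..1, w (x, t) * pdt U (x, t))
      = -δ * (∫ x in (0:ℝ)..1, w (x, t) * pdx (pdx w) (x, t))
        + μ * ∫ x in (0:ℝ)..1, w (x, t) ^ 2 := by
    rw [← intervalIntegral.integral_const_mul, ← intervalIntegral.integral_const_mul,
      ← intervalIntegral.integral_add int_wwxx int_wsq]
    apply intervalIntegral.integral_congr
    intro x hx
    have hx' : x ∈ Icc (0:ℝ) 1 := by
      rwa [Set.uIcc_of_le (by norm_num : (0:ℝ) ≤ 1)] at hx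
    show w (x, t) * pdt U (x, t) = -δ * (w (x, t) * pdx (pdx w) (x, t)) + μ * w (x, t) ^ 2
    rw [hPDEc x hx']
    ring
  -- second integration by parts
  have hibp2 : (∫ x in (0:ℝ)..1, w (x, t) * pdx (pdx w) (x, t))
      = w (1, t) * pdx w (1, t) - w (0, t) * pdx w (0, t)
        - ∫ x in (0:ℝ)..1, pdx w (x, t) * pdx w (x, t) :=
    intervalIntegral.integral_mul_deriv_eq_deriv_mul
      (fun x _ => hasDerivAt_slice_x hws t x)
      (fun x _ => hasDerivAt_slice_x (contDiff_pdx hws) t x)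
      ((csl cwx).intervalIntegrable 0 1)
      ((csl cwxx).intervalIntegrable 0 1)
  have hsq : (∫ x in (0:ℝ)..1, pdx w (x, t) * pdx w (x, t))
      = ∫ x in (0:ℝ)..1, pdx w (x, t) ^ 2 := by
    apply intervalIntegral.integral_congr
    intro x _
    show pdx w (x, t) * pdx w (x, t) = pdx w (x, t) ^ 2
    ring
  -- assemble
  rw [hwfun t, hwxfun t]
  simp only [hux2]
  rw [hux3 t 1, ← hwapp 1 t]
  have hgoal2 : (∫ x in (0:ℝ)..1, (ε ^ 2 * pdx (pdx U) (x, t) - fCH (u x t)) ^ 2)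
      = ∫ x in (0:ℝ)..1, w (x, t) ^ 2 := by
    apply intervalIntegral.integral_congr
    intro x _
    show (ε ^ 2 * pdx (pdx U) (x, t) - fCH (u x t)) ^ 2 = w (x, t) ^ 2
    rw [hwapp]
  rw [hgoal2, hEderiv.deriv, hI2, hI3, hibp2, hwx0, hwx1, hsq]
  ring
end

section
/- Fix ε > 0, δ > 0, μ ≥ 0, T > 0, and let f(u) = u³ − u. Let u : [0,1] × [0,T] → ℝ be smooth and satisfy u_t = −δ·(ε²u_xx − f(u))_xx + μ·(ε²u_xx − f(u)) on (0,1) × (0,T), with boundary conditions u_x(0,t) = u_x(1,t) = 0 and u_xxx(0,t) = 0 for all t, and with conserved mass: ∫₀¹ u(x,t) dx = ∫₀¹ u(x,0) dx for all t ∈ [0,T]. Then for every t ∈ (0,T): ½·(d/dt)∫₀¹ u(x,t)² dx + δ·ε²·∫₀¹ u_xx(x,t)² dx + μ·ε²·∫₀¹ u_x(x,t)² dx ≤ δ·∫₀¹ u_x(x,t)² dx + μ·( 2·∫₀¹ u_x(x,t)² dx + 2·∫₀¹ u(x,t)² dx + (∫₀¹ |f(u(x,t))| dx)² ). -/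
open Set

open Function MeasureTheory intervalIntegral
set_option maxHeartbeats 2000000

lemma arith_CH (δ μ ε2 A B C F G P Q b e IV : ℝ) (hδ : 0 < δ) (hμ : 0 ≤ μ)
    (h1 : IV = -δ * (b * e - (ε2 * -A - P)) + μ * (ε2 * -B - Q))
    (h2 : (0:ℝ) = -δ * e + μ * -F)
    (hP : -B ≤ P) (hQ : -C ≤ Q) (hFG : |F| ≤ G) (hB : 0 ≤ B) (hC : 0 ≤ C)
    (hag : b ^ 2 ≤ 2 * C + B) :
    IV + δ * ε2 * A + μ * ε2 * B ≤ δ * B + μ * (2 * B + 2 * C + G ^ 2) := by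
  have hbe : δ * (b * e) = -(b * (μ * F)) := by
    have h : δ * e = -(μ * F) := by linarith
    calc δ * (b * e) = b * (δ * e) := by ring
      _ = -(b * (μ * F)) := by rw [h]; ring
  have hF2 : F ^ 2 ≤ G ^ 2 := by nlinarith [le_abs_self F, neg_abs_le F, abs_nonneg F]
  have hIV : IV = b * (μ * F) - δ * ε2 * A - δ * P - μ * ε2 * B - μ * Q := by
    rw [h1]; linarith [hbe, h1]
  rw [hIV]
  nlinarith [mul_nonneg hμ (sq_nonneg (b - F)),
    mul_nonneg hδ.le (by linarith : (0:ℝ) ≤ B + P),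
    mul_nonneg hμ (by linarith : (0:ℝ) ≤ C + Q),
    mul_nonneg hμ (by linarith : (0:ℝ) ≤ G ^ 2 - F ^ 2),
    mul_nonneg hμ (by linarith : (0:ℝ) ≤ 2 * C + B - b ^ 2),
    mul_nonneg hμ hB, mul_nonneg hμ hC]

lemma key_estimate (ε δ μ : ℝ) (hδ : 0 < δ) (hμ : 0 ≤ μ)
    (v ut : ℝ → ℝ) (hv : ContDiff ℝ ((⊤ : ℕ∞) : WithTop ℕ∞) v) (hut : Continuous ut)
    (heq : ∀ x ∈ Ioo (0:ℝ) 1, ut x =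
      -δ * deriv (deriv (fun y => ε ^ 2 * deriv (deriv v) y - fCH (v y))) x
        + μ * (ε ^ 2 * deriv (deriv v) x - fCH (v x)))
    (hb1 : deriv v 0 = 0) (hb2 : deriv v 1 = 0)
    (hb3 : deriv (deriv (deriv v)) 0 = 0)
    (hmass0 : ∫ x in (0:ℝ)..1, ut x = 0) :
    (∫ x in (0:ℝ)..1, v x * ut x)
      + δ * ε ^ 2 * (∫ x in (0:ℝ)..1, (deriv (deriv v) x) ^ 2)
      + μ * ε ^ 2 * (∫ x in (0:ℝ)..1, (deriv v x) ^ 2)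
    ≤ δ * (∫ x in (0:ℝ)..1, (deriv v x) ^ 2)
      + μ * (2 * (∫ x in (0:ℝ)..1, (deriv v x) ^ 2)
          + 2 * (∫ x in (0:ℝ)..1, (v x) ^ 2)
          + (∫ x in (0:ℝ)..1, |fCH (v x)|) ^ 2) := by
  have h1le : (1 : WithTop ℕ∞) ≤ ((⊤ : ℕ∞) : WithTop ℕ∞) := by exact_mod_cast le_top
  have hfCH : ContDiff ℝ ((⊤ : ℕ∞) : WithTop ℕ∞) fCH := by
    unfold fCH; exact (contDiff_id.pow 3).sub contDiff_id
  set v1 : ℝ → ℝ := deriv v with hv1d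
  set v2 : ℝ → ℝ := deriv v1 with hv2d
  set v3 : ℝ → ℝ := deriv v2 with hv3d
  set w : ℝ → ℝ := fun y => ε ^ 2 * v2 y - fCH (v y) with hwd
  set w1 : ℝ → ℝ := deriv w with hw1d
  set w2 : ℝ → ℝ := deriv w1 with hw2d
  -- smoothness
  have hv1 : ContDiff ℝ ((⊤ : ℕ∞) : WithTop ℕ∞) v1 := (contDiff_infty_iff_deriv.mp hv).2
  have hv2 : ContDiff ℝ ((⊤ : ℕ∞) : WithTop ℕ∞) v2 := (contDiff_infty_iff_deriv.mp hv1).2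
  have hv3 : ContDiff ℝ ((⊤ : ℕ∞) : WithTop ℕ∞) v3 := (contDiff_infty_iff_deriv.mp hv2).2
  have hw : ContDiff ℝ ((⊤ : ℕ∞) : WithTop ℕ∞) w := (contDiff_const.mul hv2).sub (hfCH.comp hv)
  have hw1 : ContDiff ℝ ((⊤ : ℕ∞) : WithTop ℕ∞) w1 := (contDiff_infty_iff_deriv.mp hw).2
  have hw2 : ContDiff ℝ ((⊤ : ℕ∞) : WithTop ℕ∞) w2 := (contDiff_infty_iff_deriv.mp hw1).2
  have Dv : ∀ x, HasDerivAt v (v1 x) x := fun x => (hv.differentiable (lt_of_lt_of_le zero_lt_one h1le).ne' x).hasDerivAt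
  have Dv1 : ∀ x, HasDerivAt v1 (v2 x) x := fun x => (hv1.differentiable (lt_of_lt_of_le zero_lt_one h1le).ne' x).hasDerivAt
  have Dv2 : ∀ x, HasDerivAt v2 (v3 x) x := fun x => (hv2.differentiable (lt_of_lt_of_le zero_lt_one h1le).ne' x).hasDerivAt
  have Dw1 : ∀ x, HasDerivAt w1 (w2 x) x := fun x => (hw1.differentiable (lt_of_lt_of_le zero_lt_one h1le).ne' x).hasDerivAt
  -- continuity
  have hvc : Continuous v := hv.continuous
  have hv1c : Continuous v1 := hv1.continuous
  have hv2c : Continuous v2 := hv2.continuous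
  have hv3c : Continuous v3 := hv3.continuous
  have hwc : Continuous w := hw.continuous
  have hw1c : Continuous w1 := hw1.continuous
  have hw2c : Continuous w2 := hw2.continuous
  have hfvc : Continuous (fun x => fCH (v x)) := hfCH.continuous.comp hvc
  -- formula for w1
  have hw1eq : ∀ x, w1 x = ε ^ 2 * v3 x - (3 * v x ^ 2 - 1) * v1 x := by
    intro x
    have h1 : HasDerivAt (fun y => ε ^ 2 * v2 y) (ε ^ 2 * v3 x) x := (Dv2 x).const_mul _
    have hfd : HasDerivAt fCH (3 * v x ^ 2 - 1) (v x) := by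
      have h := (hasDerivAt_pow 3 (v x)).sub (hasDerivAt_id (v x))
      have he : ((3:ℕ):ℝ) * v x ^ (3-1) - 1 = 3 * v x ^ 2 - 1 := by norm_num
      rw [he] at h
      exact h
    have h2 : HasDerivAt (fun y => fCH (v y)) ((3 * v x ^ 2 - 1) * v1 x) x :=
      hfd.comp x (Dv x)
    exact (h1.sub h2).deriv
  have hw1_0 : w1 0 = 0 := by rw [hw1eq 0, hb3, hb1]; ring
  have hw1_1 : w1 1 = ε ^ 2 * v3 1 := by rw [hw1eq 1, hb2]; ring
  -- integrabilities
  have int_of_cont : ∀ f : ℝ → ℝ, Continuous f → IntervalIntegrable f volume 0 1 :=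
    fun f hf => hf.intervalIntegrable 0 1
  -- FTC facts
  have Iw2 : (∫ x in (0:ℝ)..1, w2 x) = ε ^ 2 * v3 1 := by
    rw [integral_eq_sub_of_hasDerivAt (fun x _ => Dw1 x) (int_of_cont _ hw2c), hw1_1, hw1_0]
    ring
  have Iv2 : (∫ x in (0:ℝ)..1, v2 x) = 0 := by
    rw [integral_eq_sub_of_hasDerivAt (fun x _ => Dv1 x) (int_of_cont _ hv2c), hb2, hb1]
    ring
  have Iw : (∫ x in (0:ℝ)..1, w x) = -(∫ x in (0:ℝ)..1, fCH (v x)) := by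
    have hs : (∫ x in (0:ℝ)..1, (ε ^ 2 * v2 x - fCH (v x)))
        = (∫ x in (0:ℝ)..1, ε ^ 2 * v2 x) - ∫ x in (0:ℝ)..1, fCH (v x) :=
      integral_sub (int_of_cont _ (continuous_const.mul hv2c)) (int_of_cont _ hfvc)
    simp only [hwd]
    rw [hs, intervalIntegral.integral_const_mul, Iv2]
    ring
  -- a.e. congruence
  have ae_ne_one : ∀ᵐ x : ℝ, x ≠ (1:ℝ) :=
    measure_eq_zero_iff_ae_notMem.mp (measure_singleton 1)
  have hcongr : ∀ g : ℝ → ℝ, (∫ x in (0:ℝ)..1, g x * ut x)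
      = ∫ x in (0:ℝ)..1, g x * (-δ * w2 x + μ * w x) := by
    intro g
    apply intervalIntegral.integral_congr_ae
    filter_upwards [ae_ne_one] with x hx1 hx
    rw [uIoc_of_le (by norm_num : (0:ℝ) ≤ 1)] at hx
    have hxIoo : x ∈ Ioo (0:ℝ) 1 := ⟨hx.1, lt_of_le_of_ne hx.2 hx1⟩
    rw [heq x hxIoo]
  -- mass identity
  have hmass' : (0:ℝ) = -δ * (ε ^ 2 * v3 1) + μ * -(∫ x in (0:ℝ)..1, fCH (v x)) := by
    have h1 : (∫ x in (0:ℝ)..1, ut x) = ∫ x in (0:ℝ)..1, (1:ℝ) * ut x := by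
      apply integral_congr; intro x _; show ut x = 1 * ut x; ring
    have h3 : (∫ x in (0:ℝ)..1, (1:ℝ) * (-δ * w2 x + μ * w x))
        = -δ * (∫ x in (0:ℝ)..1, w2 x) + μ * ∫ x in (0:ℝ)..1, w x := by
      have he : (fun x => (1:ℝ) * (-δ * w2 x + μ * w x))
          = fun x => -δ * w2 x + μ * w x := by funext x; ring
      rw [he, integral_add ((int_of_cont _ hw2c).const_mul _) ((int_of_cont _ hwc).const_mul _),
        intervalIntegral.integral_const_mul, intervalIntegral.integral_const_mul]
    have e1 := (h1.trans (hcongr (fun _ => (1:ℝ)))).trans h3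
    rw [hmass0, Iw2, Iw] at e1
    exact e1
  -- main splitting
  have hsplit : (∫ x in (0:ℝ)..1, v x * ut x)
      = -δ * (∫ x in (0:ℝ)..1, v x * w2 x) + μ * ∫ x in (0:ℝ)..1, v x * w x := by
    rw [hcongr v]
    have he : (fun x => v x * (-δ * w2 x + μ * w x))
        = fun x => -δ * (v x * w2 x) + μ * (v x * w x) := by funext x; ring
    rw [he, integral_add ((int_of_cont (fun x => v x * w2 x) (hvc.mul hw2c)).const_mul _)
      ((int_of_cont (fun x => v x * w x) (hvc.mul hwc)).const_mul _), intervalIntegral.integral_const_mul, intervalIntegral.integral_const_mul]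
  -- IBP 1
  have IBP1 : (∫ x in (0:ℝ)..1, v x * w2 x)
      = v 1 * (ε ^ 2 * v3 1) - ∫ x in (0:ℝ)..1, v1 x * w1 x := by
    rw [integral_mul_deriv_eq_deriv_mul (fun x _ => Dv x) (fun x _ => Dw1 x)
      (int_of_cont _ hv1c) (int_of_cont _ hw2c), hw1_0, hw1_1]
    ring
  -- IBP 2
  have IBP2 : (∫ x in (0:ℝ)..1, v1 x * v3 x) = -∫ x in (0:ℝ)..1, (v2 x) ^ 2 := by
    rw [integral_mul_deriv_eq_deriv_mul (fun x _ => Dv1 x) (fun x _ => Dv2 x)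
      (int_of_cont _ hv2c) (int_of_cont _ hv3c), hb1, hb2]
    rw [show (fun x => v2 x * v2 x) = fun x => (v2 x) ^ 2 by funext x; ring]
    ring
  -- IBP 3
  have IBP3 : (∫ x in (0:ℝ)..1, v x * v2 x) = -∫ x in (0:ℝ)..1, (v1 x) ^ 2 := by
    rw [integral_mul_deriv_eq_deriv_mul (fun x _ => Dv x) (fun x _ => Dv1 x)
      (int_of_cont _ hv1c) (int_of_cont _ hv2c), hb1, hb2]
    rw [show (fun x => v1 x * v1 x) = fun x => (v1 x) ^ 2 by funext x; ring]
    ring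
  -- ∫ v1 w1
  have Iv1w1 : (∫ x in (0:ℝ)..1, v1 x * w1 x)
      = ε ^ 2 * -(∫ x in (0:ℝ)..1, (v2 x) ^ 2)
        - ∫ x in (0:ℝ)..1, (3 * v x ^ 2 - 1) * (v1 x) ^ 2 := by
    have h1 : (∫ x in (0:ℝ)..1, v1 x * w1 x)
        = ∫ x in (0:ℝ)..1, (ε ^ 2 * (v1 x * v3 x) - (3 * v x ^ 2 - 1) * (v1 x) ^ 2) := by
      apply integral_congr; intro x _
      show v1 x * w1 x = ε ^ 2 * (v1 x * v3 x) - (3 * v x ^ 2 - 1) * (v1 x) ^ 2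
      rw [hw1eq x]; ring
    rw [h1, integral_sub ((int_of_cont (fun x => v1 x * v3 x) (hv1c.mul hv3c)).const_mul _)
      (int_of_cont (fun x => (3 * v x ^ 2 - 1) * (v1 x) ^ 2) (((continuous_const.mul (hvc.pow 2)).sub continuous_const).mul (hv1c.pow 2))),
      intervalIntegral.integral_const_mul, IBP2]
  -- ∫ v w
  have Ivw : (∫ x in (0:ℝ)..1, v x * w x)
      = ε ^ 2 * -(∫ x in (0:ℝ)..1, (v1 x) ^ 2) - ∫ x in (0:ℝ)..1, v x * fCH (v x) := by
    have h1 : (∫ x in (0:ℝ)..1, v x * w x)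
        = ∫ x in (0:ℝ)..1, (ε ^ 2 * (v x * v2 x) - v x * fCH (v x)) := by
      apply integral_congr; intro x _
      show v x * w x = ε ^ 2 * (v x * v2 x) - v x * fCH (v x)
      simp only [hwd]; ring
    rw [h1, integral_sub ((int_of_cont (fun x => v x * v2 x) (hvc.mul hv2c)).const_mul _)
      (int_of_cont (fun x => v x * fCH (v x)) (hvc.mul hfvc)), intervalIntegral.integral_const_mul, IBP3]
  -- Agmon-type bound
  have agmon : (v 1) ^ 2 ≤ 2 * (∫ x in (0:ℝ)..1, (v x) ^ 2) + ∫ x in (0:ℝ)..1, (v1 x) ^ 2 := by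
    have hg : ∀ x ∈ uIcc (0:ℝ) 1, HasDerivAt (fun y => y * (v y) ^ 2)
        (1 * v x ^ 2 + x * (2 * v x ^ 1 * v1 x)) x :=
      fun x _ => (hasDerivAt_id x).mul ((Dv x).pow 2)
    have hgc : Continuous (fun x => 1 * v x ^ 2 + x * (2 * v x ^ 1 * v1 x)) :=
      (continuous_const.mul (hvc.pow 2)).add
        (continuous_id.mul ((continuous_const.mul (hvc.pow 1)).mul hv1c))
    have hft : (∫ x in (0:ℝ)..1, (1 * v x ^ 2 + x * (2 * v x ^ 1 * v1 x))) = (v 1) ^ 2 := by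
      rw [integral_eq_sub_of_hasDerivAt hg (int_of_cont _ hgc)]
      ring
    have hmono : (∫ x in (0:ℝ)..1, (1 * v x ^ 2 + x * (2 * v x ^ 1 * v1 x)))
        ≤ ∫ x in (0:ℝ)..1, (2 * (v x) ^ 2 + (v1 x) ^ 2) := by
      apply integral_mono_on (by norm_num) (int_of_cont _ hgc)
        (int_of_cont (fun x => 2 * (v x) ^ 2 + (v1 x) ^ 2) ((continuous_const.mul (hvc.pow 2)).add (hv1c.pow 2)))
      intro x hx
      have h1 : x * (2 * v x ^ 1 * v1 x) ≤ |2 * v x * v1 x| := by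
        rcases le_or_gt 0 (2 * v x * v1 x) with h | h
        · calc x * (2 * v x ^ 1 * v1 x) = x * (2 * v x * v1 x) := by ring
            _ ≤ 1 * (2 * v x * v1 x) := mul_le_mul_of_nonneg_right hx.2 h
            _ ≤ |2 * v x * v1 x| := by rw [one_mul]; exact le_abs_self _
        · calc x * (2 * v x ^ 1 * v1 x) = x * (2 * v x * v1 x) := by ring
            _ ≤ 0 := mul_nonpos_of_nonneg_of_nonpos hx.1 h.le
            _ ≤ |2 * v x * v1 x| := abs_nonneg _
      have h2 : |2 * v x * v1 x| ≤ v x ^ 2 + v1 x ^ 2 := by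
        rw [abs_le]
        constructor <;> nlinarith [sq_nonneg (v x + v1 x), sq_nonneg (v x - v1 x)]
      linarith
    have hsum : (∫ x in (0:ℝ)..1, (2 * (v x) ^ 2 + (v1 x) ^ 2))
        = 2 * (∫ x in (0:ℝ)..1, (v x) ^ 2) + ∫ x in (0:ℝ)..1, (v1 x) ^ 2 := by
      rw [integral_add ((int_of_cont (fun x => (v x) ^ 2) (hvc.pow 2)).const_mul _) (int_of_cont (fun x => (v1 x) ^ 2) (hv1c.pow 2)),
        intervalIntegral.integral_const_mul]
    rw [← hft, ← hsum]
    exact hmono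
  -- pointwise bounds
  have hP : -(∫ x in (0:ℝ)..1, (v1 x) ^ 2)
      ≤ ∫ x in (0:ℝ)..1, (3 * v x ^ 2 - 1) * (v1 x) ^ 2 := by
    rw [← intervalIntegral.integral_neg]
    apply integral_mono_on (by norm_num) (int_of_cont (fun x => -((v1 x) ^ 2)) (hv1c.pow 2).neg)
      (int_of_cont (fun x => (3 * v x ^ 2 - 1) * (v1 x) ^ 2) (((continuous_const.mul (hvc.pow 2)).sub continuous_const).mul (hv1c.pow 2)))
    intro x _
    nlinarith [sq_nonneg (v x * v1 x)]
  have hQ : -(∫ x in (0:ℝ)..1, (v x) ^ 2) ≤ ∫ x in (0:ℝ)..1, v x * fCH (v x) := by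
    rw [← intervalIntegral.integral_neg]
    apply integral_mono_on (by norm_num) (int_of_cont (fun x => -((v x) ^ 2)) (hvc.pow 2).neg)
      (int_of_cont (fun x => v x * fCH (v x)) (hvc.mul hfvc))
    intro x _
    have he : v x * fCH (v x) = v x ^ 4 - v x ^ 2 := by unfold fCH; ring
    rw [he]
    nlinarith [sq_nonneg (v x ^ 2)]
  have hFG : |∫ x in (0:ℝ)..1, fCH (v x)| ≤ ∫ x in (0:ℝ)..1, |fCH (v x)| :=
    abs_integral_le_integral_abs (by norm_num)
  have hBnn : (0:ℝ) ≤ ∫ x in (0:ℝ)..1, (v1 x) ^ 2 :=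
    integral_nonneg (by norm_num) (fun x _ => sq_nonneg _)
  have hCnn : (0:ℝ) ≤ ∫ x in (0:ℝ)..1, (v x) ^ 2 :=
    integral_nonneg (by norm_num) (fun x _ => sq_nonneg _)
  -- assemble
  have h1 : (∫ x in (0:ℝ)..1, v x * ut x)
      = -δ * (v 1 * (ε ^ 2 * v3 1)
          - (ε ^ 2 * -(∫ x in (0:ℝ)..1, (v2 x) ^ 2)
            - ∫ x in (0:ℝ)..1, (3 * v x ^ 2 - 1) * (v1 x) ^ 2))
        + μ * (ε ^ 2 * -(∫ x in (0:ℝ)..1, (v1 x) ^ 2)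
            - ∫ x in (0:ℝ)..1, v x * fCH (v x)) := by
    rw [hsplit, IBP1, Iv1w1, Ivw]
  exact arith_CH δ μ (ε ^ 2) (∫ x in (0:ℝ)..1, (v2 x) ^ 2) (∫ x in (0:ℝ)..1, (v1 x) ^ 2)
    (∫ x in (0:ℝ)..1, (v x) ^ 2) (∫ x in (0:ℝ)..1, fCH (v x)) (∫ x in (0:ℝ)..1, |fCH (v x)|)
    (∫ x in (0:ℝ)..1, (3 * v x ^ 2 - 1) * (v1 x) ^ 2) (∫ x in (0:ℝ)..1, v x * fCH (v x))
    (v 1) (ε ^ 2 * v3 1) (∫ x in (0:ℝ)..1, v x * ut x) hδ hμ h1 hmass' hP hQ hFG hBnn hCnn agmon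
-- helpers from t2
noncomputable def DTpar (F : ℝ → ℝ → ℝ) : ℝ → ℝ → ℝ := fun x t => deriv (fun s => F x s) t

lemma hasDerivAt_slice_t_s14 (F : ℝ → ℝ → ℝ) (hF : ContDiff ℝ (⊤ : ℕ∞) (Function.uncurry F)) (p : ℝ × ℝ) :
    HasDerivAt (fun s => F p.1 s) (fderiv ℝ (Function.uncurry F) p ((0:ℝ), (1:ℝ))) p.2 := by
  have h1 : HasDerivAt (fun s => (p.1, s)) ((0:ℝ), (1:ℝ)) p.2 :=
    (hasDerivAt_const p.2 p.1).prodMk (hasDerivAt_id p.2)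
  have h2 : HasFDerivAt (Function.uncurry F) (fderiv ℝ (Function.uncurry F) p) (p.1, p.2) :=
    (hF.differentiable (by simp) (p.1, p.2)).hasFDerivAt
  exact h2.comp_hasDerivAt p.2 h1

lemma contDiff_DTpar (F : ℝ → ℝ → ℝ) (hF : ContDiff ℝ (⊤ : ℕ∞) (Function.uncurry F)) :
    ContDiff ℝ (⊤ : ℕ∞) (Function.uncurry (DTpar F)) := by
  have heq : Function.uncurry (DTpar F)
      = fun p : ℝ × ℝ => fderiv ℝ (Function.uncurry F) p ((0:ℝ), (1:ℝ)) := by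
    funext p; exact (hasDerivAt_slice_t_s14 F hF p).deriv
  rw [heq]; exact (hF.fderiv_right (by simp)).clm_apply contDiff_const

lemma slice_x_contDiff (F : ℝ → ℝ → ℝ) (hF : ContDiff ℝ (⊤ : ℕ∞) (Function.uncurry F)) (t : ℝ) :
    ContDiff ℝ (⊤ : ℕ∞) (fun x => F x t) :=
  hF.comp (contDiff_id.prodMk contDiff_const)

lemma hasDerivAt_param_integral (F : ℝ → ℝ → ℝ) (hF : ContDiff ℝ (⊤ : ℕ∞) (Function.uncurry F)) (t : ℝ) :
    HasDerivAt (fun s => ∫ x in (0:ℝ)..1, F x s) (∫ x in (0:ℝ)..1, DTpar F x t) t := by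
  have hDT := contDiff_DTpar F hF
  have hDTc : Continuous (Function.uncurry (DTpar F)) := hDT.continuous
  obtain ⟨C, hC⟩ : ∃ C, ∀ p ∈ (Icc (0:ℝ) 1 ×ˢ Icc (t-1) (t+1)),
      ‖Function.uncurry (DTpar F) p‖ ≤ C :=
    (isCompact_Icc.prod isCompact_Icc).exists_bound_of_continuousOn hDTc.continuousOn
  have main := hasDerivAt_integral_of_dominated_loc_of_deriv_le (μ := volume)
    (F := fun s x => F x s) (F' := fun s x => DTpar F x s) (x₀ := t) (a := 0) (b := 1)
    (bound := fun _ => C) (s := Metric.ball t 1) (Metric.ball_mem_nhds t one_pos)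
    (Filter.Eventually.of_forall fun s =>
      ((slice_x_contDiff F hF s).continuous).aestronglyMeasurable)
    ((slice_x_contDiff F hF t).continuous.intervalIntegrable 0 1)
    ((hDT.continuous.comp (continuous_id.prodMk continuous_const)).aestronglyMeasurable)
    ?_ (intervalIntegrable_const) ?_
  · exact main.2
  · refine Filter.Eventually.of_forall fun x hx s hs => ?_
    rw [uIoc_of_le (by norm_num : (0:ℝ) ≤ 1)] at hx
    refine hC (x, s) ⟨⟨le_of_lt hx.1, hx.2⟩, ?_⟩
    rw [Real.ball_eq_Ioo] at hs
    exact ⟨le_of_lt hs.1, le_of_lt hs.2⟩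
  · refine Filter.Eventually.of_forall fun x hx s hs => ?_
    show HasDerivAt (fun s' => F x s') (DTpar F x s) s
    have h := hasDerivAt_slice_t_s14 F hF (x, s)
    have heq : DTpar F x s = fderiv ℝ (Function.uncurry F) (x, s) ((0:ℝ), (1:ℝ)) := h.deriv
    rw [heq]; exact h

theorem stmt_14 (ε δ μ T : ℝ) (hε : 0 < ε) (hδ : 0 < δ) (hμ : 0 ≤ μ) (hT : 0 < T)
    (u : ℝ → ℝ → ℝ) (hu : ContDiff ℝ (⊤ : ℕ∞) (Function.uncurry u))
    (hEq : ∀ x ∈ Ioo (0:ℝ) 1, ∀ t ∈ Ioo (0:ℝ) T,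
      deriv (fun s => u x s) t =
        -δ * deriv (deriv (fun y =>
            ε ^ 2 * deriv (deriv (fun z => u z t)) y - fCH (u y t))) x
        + μ * (ε ^ 2 * deriv (deriv (fun y => u y t)) x - fCH (u x t)))
    (hbc1 : ∀ t ∈ Icc (0:ℝ) T, deriv (fun y => u y t) 0 = 0)
    (hbc2 : ∀ t ∈ Icc (0:ℝ) T, deriv (fun y => u y t) 1 = 0)
    (hbc3 : ∀ t ∈ Icc (0:ℝ) T, iteratedDeriv 3 (fun y => u y t) 0 = 0)
    (hmass : ∀ t ∈ Icc (0:ℝ) T,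
      ∫ x in (0:ℝ)..1, u x t = ∫ x in (0:ℝ)..1, u x 0) :
    ∀ t ∈ Ioo (0:ℝ) T,
      1 / 2 * deriv (fun s => ∫ x in (0:ℝ)..1, (u x s) ^ 2) t
        + δ * ε ^ 2 * (∫ x in (0:ℝ)..1, (deriv (deriv (fun y => u y t)) x) ^ 2)
        + μ * ε ^ 2 * (∫ x in (0:ℝ)..1, (deriv (fun y => u y t) x) ^ 2)
      ≤ δ * (∫ x in (0:ℝ)..1, (deriv (fun y => u y t) x) ^ 2)
        + μ * (2 * (∫ x in (0:ℝ)..1, (deriv (fun y => u y t) x) ^ 2)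
            + 2 * (∫ x in (0:ℝ)..1, (u x t) ^ 2)
            + (∫ x in (0:ℝ)..1, |fCH (u x t)|) ^ 2) := by
  intro t ht
  have htI : t ∈ Icc (0:ℝ) T := ⟨ht.1.le, ht.2.le⟩
  -- slice smoothness
  have hv : ContDiff ℝ ((⊤ : ℕ∞) : WithTop ℕ∞) (fun x => u x t) :=
    (slice_x_contDiff u hu t).of_le (by simp)
  -- continuity of time derivative in x
  have hutc : Continuous (fun x => deriv (fun s => u x s) t) :=
    (contDiff_DTpar u hu).continuous.comp (continuous_id.prodMk continuous_const)
  -- mass conservation gives zero integral of time derivative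
  have hmderiv := hasDerivAt_param_integral u hu t
  have hconst : HasDerivAt (fun s => ∫ x in (0:ℝ)..1, u x s) 0 t := by
    have hev : (fun s => ∫ x in (0:ℝ)..1, u x s)
        =ᶠ[nhds t] (fun _ => ∫ x in (0:ℝ)..1, u x 0) :=
      Filter.eventuallyEq_of_mem (Ioo_mem_nhds ht.1 ht.2)
        (fun s hs => hmass s (Ioo_subset_Icc_self hs))
    exact (hasDerivAt_const t _).congr_of_eventuallyEq hev
  have hmass0 : (∫ x in (0:ℝ)..1, deriv (fun s => u x s) t) = 0 := hmderiv.unique hconst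
  -- third boundary condition
  have hb3 : deriv (deriv (deriv (fun y => u y t))) 0 = 0 := by
    have h := hbc3 t htI
    simpa [iteratedDeriv_succ, iteratedDeriv_one] using h
  -- the main estimate
  have hkey : (∫ x in (0:ℝ)..1, u x t * deriv (fun s => u x s) t)
      + δ * ε ^ 2 * (∫ x in (0:ℝ)..1, (deriv (deriv (fun y => u y t)) x) ^ 2)
      + μ * ε ^ 2 * (∫ x in (0:ℝ)..1, (deriv (fun y => u y t) x) ^ 2)
    ≤ δ * (∫ x in (0:ℝ)..1, (deriv (fun y => u y t) x) ^ 2)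
      + μ * (2 * (∫ x in (0:ℝ)..1, (deriv (fun y => u y t) x) ^ 2)
          + 2 * (∫ x in (0:ℝ)..1, (u x t) ^ 2)
          + (∫ x in (0:ℝ)..1, |fCH (u x t)|) ^ 2) :=
    key_estimate ε δ μ hδ hμ (fun x => u x t) (fun x => deriv (fun s => u x s) t)
      hv hutc (fun x hx => hEq x hx t ht) (hbc1 t htI) (hbc2 t htI) hb3 hmass0
  -- derivative of the energy
  have hsq : ContDiff ℝ (⊤ : ℕ∞) (Function.uncurry (fun x s => (u x s) ^ 2)) := by
    have he : Function.uncurry (fun x s => (u x s) ^ 2)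
        = fun p : ℝ × ℝ => (Function.uncurry u p) ^ 2 := rfl
    rw [he]; exact hu.pow 2
  have hder := hasDerivAt_param_integral (fun x s => (u x s) ^ 2) hsq t
  have hder2 : deriv (fun s => ∫ x in (0:ℝ)..1, (u x s) ^ 2) t
      = ∫ x in (0:ℝ)..1, 2 * (u x t * deriv (fun s => u x s) t) := by
    rw [hder.deriv]
    apply intervalIntegral.integral_congr
    intro x _
    show deriv (fun s => (u x s) ^ 2) t = 2 * (u x t * deriv (fun s => u x s) t)
    have hx : HasDerivAt (fun s => u x s) (deriv (fun s => u x s) t) t := by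
      have h := hasDerivAt_slice_t_s14 u hu (x, t)
      exact h.deriv ▸ h
    rw [(hx.fun_pow 2).deriv]
    push_cast
    ring
  rw [hder2, intervalIntegral.integral_const_mul]
  linarith [hkey]
end
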